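/- Let 𝒜 = (Q, A, τ) be a Mealy automaton with A finite and S the semigroup it generates. Let v₁, v₂ ∈ A* and suppose there exists a bijection φ : S·v₁ → S·v₂ such that φ(v₁) = v₂ and ψ_{v₁}^φ = ψ_{v₂}. Then m_{v₁⌢w} = m_{v₂⌢w} for all w ∈ A*. -/

import Mathlib

/-!
Framework for Mealy automata `𝒜 = (Q, A, τ)` with `τ q a = (q·a, q@a)`.

* `Mealy.act τ q` is the endomorphism of the free monoid `A*` (modelled as `List A`)
  induced by the state `q`, defined by `q·(a⌢u) = (q·a)⌢((q@a)·u)`.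
* `Mealy.Sgp τ` is the semigroup (with identity adjoined, i.e. the submonoid) of
  `End(A*)` generated by the states.
* `Mealy.extω f ξ` is the extension of a length- and prefix-preserving endomorphism
  `f` of `A*` to right-infinite words `ξ : ℕ → A`: its `n`-th letter is the `n`-th
  letter of the image of the length-`(n+1)` prefix of `ξ`.
* `Mealy.catω v ξ` is the concatenation `v⌢ξ` of a finite word with an infinite word.
* `Mealy.orbit τ u` and `Mealy.orbitω τ ξ` are the orbits `S·u` and `S·ξ`.
* `Mealy.mval τ v` is `m_v = sup_{ξ ∈ A^ω} |S·(v⌢ξ)| ∈ ℕ∞`.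
* `Mealy.sect f w` is the section `f@w`, characterized for `f ∈ S` by
  `f·(w⌢u) = (f·w)⌢((f@w)·u)`.
-/

namespace Mealy

variable {Q A : Type*}

/-- The action of a state on a finite word: `q·(a⌢u) = (q·a)⌢((q@a)·u)`. -/
def act (τ : Q → A → A × Q) : Q → List A → List A
  | _, [] => []
  | q, a :: u => (τ q a).1 :: act τ (τ q a).2 u

/-- The semigroup `S ≤ End(A*)` generated by the states of the automaton
(as a submonoid of `Function.End (List A)`, where multiplication is composition). -/
def Sgp (τ : Q → A → A × Q) : Submonoid (Function.End (List A)) :=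
  Submonoid.closure { f : Function.End (List A) | ∃ q : Q, f = act τ q }

/-- Extension of a (length- and prefix-preserving) endomorphism of `A*` to `A^ω`:
the `n`-th letter of `f·ξ` is the `n`-th letter of the image of the prefix of `ξ`
of length `n+1`. -/
def extω (f : Function.End (List A)) (ξ : ℕ → A) : ℕ → A :=
  fun n => (f ((List.range (n + 1)).map ξ)).getD n (ξ n)

/-- Concatenation `v⌢ξ` of a finite word with a right-infinite word. -/
def catω (v : List A) (ξ : ℕ → A) : ℕ → A :=
  fun n => v.getD n (ξ (n - v.length))

/-- The orbit `S·u` of a finite word. -/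
def orbit (τ : Q → A → A × Q) (u : List A) : Set (List A) :=
  (fun f : Function.End (List A) => f u) '' (Sgp τ : Set (Function.End (List A)))

/-- The orbit `S·ξ` of a right-infinite word. -/
def orbitω (τ : Q → A → A × Q) (ξ : ℕ → A) : Set (ℕ → A) :=
  (fun f : Function.End (List A) => extω f ξ) '' (Sgp τ : Set (Function.End (List A)))

/-- `m_v = sup_{ξ ∈ A^ω} |S·(v⌢ξ)| ∈ ℕ ∪ {∞}`. -/
noncomputable def mval (τ : Q → A → A × Q) (v : List A) : ℕ∞ :=
  ⨆ ξ : ℕ → A, (orbitω τ (catω v ξ)).encard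

/-- The section `f@w` of an endomorphism of `A*` at the word `w`. -/
def sect (f : Function.End (List A)) (w : List A) : Function.End (List A) :=
  fun u => (f (w ++ u)).drop w.length

end Mealy

/-!
Every `f ∈ S` maps `v⌢ξ` to `(f·v)⌢((f@v)·ξ)`, and `|f·v| = |v|`, so `S·(v⌢ξ)` is in bijection
with the set of pairs `(f·v, (f@v)·ξ)`, `f ∈ S`. Since `f·v₂ = φ(f·v₁)` and `f@v₂ = f@v₁` for
`f ∈ S`, the injection `φ × id` maps the pairs for `v₁` bijectively onto the pairs for `v₂`; applying
this with `ξ` replaced by `w⌢ξ` gives `|S·(v₁⌢w⌢ξ)| = |S·(v₂⌢w⌢ξ)|` for every `ξ`.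
-/

namespace Mealy

section Synchronous

variable {Q A : Type*} (τ : Q → A → A × Q)

structure IsSynchronous (f : Function.End (List A)) : Prop where
  length_eq : ∀ u : List A, (f u).length = u.length
  map_append : ∀ u v : List A, f (u ++ v) = f u ++ sect f u v

theorem length_act (q : Q) (u : List A) :
    (act τ q u).length = u.length := by
  induction u generalizing q with
  | nil => rfl
  | cons a u ih => simp [act, ih]

theorem isSynchronous_act (q : Q) : IsSynchronous (act τ q) := by
  refine ⟨length_act τ q, fun u v => ?_⟩
  induction u generalizing q with
  | nil => rfl
  | cons a u ih => simpa [act, sect] using ih (τ q a).2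

theorem isSynchronous_one : IsSynchronous (1 : Function.End (List A)) :=
  ⟨fun _ => rfl, fun u _ => (List.append_right_inj u).2 List.drop_left.symm⟩

theorem IsSynchronous.mul {f g : Function.End (List A)} (hf : IsSynchronous f)
    (hg : IsSynchronous g) : IsSynchronous (f * g) := by
  refine ⟨fun u => (hf.length_eq (g u)).trans (hg.length_eq u), fun u v => ?_⟩
  show f (g (u ++ v)) = f (g u) ++ (f (g (u ++ v))).drop u.length
  rw [hg.map_append u v, hf.map_append (g u)]
  simp [sect, hf.length_eq, hg.length_eq]

theorem isSynchronous_of_mem_sgp {f : Function.End (List A)}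
    (hf : f ∈ Sgp τ) : IsSynchronous f := by
  induction hf using Submonoid.closure_induction with
  | mem x hx => obtain ⟨q, rfl⟩ := hx; exact isSynchronous_act τ q
  | one => exact isSynchronous_one
  | mul x y _ _ hx hy => exact hx.mul hy

theorem length_eq_of_mem_orbit {u v : List A} (h : u ∈ orbit τ v) :
    u.length = v.length := by
  obtain ⟨f, hf, rfl⟩ := h
  exact (isSynchronous_of_mem_sgp τ hf).length_eq v

theorem catω_of_length_le (u : List A) (ξ : ℕ → A) {n : ℕ} (h : u.length ≤ n) :
    catω u ξ n = ξ (n - u.length) :=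
  List.getD_eq_default _ _ h

theorem catω_add_length (u : List A) (ξ : ℕ → A) (n : ℕ) :
    catω u ξ (n + u.length) = ξ n := by
  rw [catω_of_length_le _ _ (by omega), Nat.add_sub_cancel]

theorem catω_append (u v : List A) (ξ : ℕ → A) :
    catω (u ++ v) ξ = catω u (catω v ξ) := by
  funext n
  unfold catω
  rcases lt_or_ge n u.length with h | h
  · rw [List.getD_append _ _ _ _ h, List.getD_eq_getElem _ _ h, List.getD_eq_getElem _ _ h]
  · rw [List.getD_append_right _ _ _ _ h, List.getD_eq_default _ _ h]
    simp [Nat.sub_sub, Nat.add_comm u.length v.length]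

theorem map_range_catω (u : List A) (ξ : ℕ → A) (m : ℕ) :
    (List.range m).map (catω u ξ) = u.take m ++ (List.range (m - u.length)).map ξ := by
  induction m with
  | zero => simp
  | succ m ih =>
    rw [List.range_succ, List.map_append, ih]
    rcases lt_or_ge m u.length with h | h
    · rw [show m + 1 - u.length = 0 by omega, show m - u.length = 0 by omega, List.take_add_one]
      simp [catω, List.getElem?_eq_getElem h]
    · rw [show m + 1 - u.length = (m - u.length) + 1 by omega, List.range_succ, List.map_append,
        List.take_of_length_le (Nat.le_succ_of_le h), List.take_of_length_le h, List.append_assoc]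
      simp [catω_of_length_le _ _ h]

theorem map_range_length_catω (u : List A) (ξ : ℕ → A) :
    (List.range u.length).map (catω u ξ) = u := by
  simp [map_range_catω]

theorem catω_inj {u v : List A} {ξ η : ℕ → A} (hl : u.length = v.length) :
    catω u ξ = catω v η ↔ u = v ∧ ξ = η := by
  refine ⟨fun he => ⟨?_, funext fun n => ?_⟩, fun ⟨rfl, rfl⟩ => rfl⟩
  · rw [← map_range_length_catω u ξ, ← map_range_length_catω v η, hl, he]
  · have hn := congrFun he (n + u.length)
    rwa [catω_add_length, hl, catω_add_length] at hn

theorem IsSynchronous.extω_catω {f : Function.End (List A)} (hf : IsSynchronous f)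
    (v : List A) (ξ : ℕ → A) : extω f (catω v ξ) = catω (f v) (extω (sect f v) ξ) := by
  funext n
  show (f ((List.range (n + 1)).map (catω v ξ))).getD n (catω v ξ n)
      = (f v).getD n (extω (sect f v) ξ (n - (f v).length))
  rw [map_range_catω]
  rcases lt_or_ge n v.length with h | h
  · have hlen : n < (f (v.take (n + 1))).length := by
      rw [hf.length_eq, List.length_take]; omega
    rw [show n + 1 - v.length = 0 by omega, List.range_zero, List.map_nil, List.append_nil,
      List.getD_eq_getElem _ _ hlen]
    conv_rhs => rw [← List.take_append_drop (n + 1) v, hf.map_append]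
    rw [List.getD_append _ _ _ _ hlen, List.getD_eq_getElem _ _ hlen]
  · have hfv : (f v).length ≤ n := by rw [hf.length_eq]; exact h
    rw [List.take_of_length_le (by omega), show n + 1 - v.length = (n - v.length) + 1 by omega,
      hf.map_append, List.getD_append_right _ _ _ _ hfv, List.getD_eq_default _ _ hfv,
      catω_of_length_le _ _ h, hf.length_eq]
    rfl

def orbitMk (v : List A) (f : Sgp τ) : orbit τ v :=
  ⟨f.1 v, f.1, f.2, rfl⟩

def split (v : List A) (ξ : ℕ → A) (f : Sgp τ) : orbit τ v × (ℕ → A) :=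
  (orbitMk τ v f, extω (sect f.1 v) ξ)

theorem encard_orbitω_catω (v : List A) (ξ : ℕ → A) :
    (orbitω τ (catω v ξ)).encard = (Set.range (split τ v ξ)).encard := by
  have hcat : Function.Injective fun p : orbit τ v × (ℕ → A) => catω p.1.1 p.2 := by
    rintro ⟨⟨u₁, h₁⟩, ξ₁⟩ ⟨⟨u₂, h₂⟩, ξ₂⟩ he
    obtain ⟨rfl, rfl⟩ := (catω_inj
      ((length_eq_of_mem_orbit τ h₁).trans (length_eq_of_mem_orbit τ h₂).symm)).1 he
    rfl
  have horbit : orbitω τ (catω v ξ) = (fun p : orbit τ v × (ℕ → A) => catω p.1.1 p.2) ''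
      Set.range (split τ v ξ) := by
    rw [orbitω, Set.image_eq_range, ← Set.range_comp]
    exact congrArg Set.range (funext fun f => (isSynchronous_of_mem_sgp τ f.2).extω_catω v ξ)
  rw [horbit, hcat.encard_image]

theorem encard_orbitω_catω_eq {v₁ v₂ : List A} (φ : orbit τ v₁ → orbit τ v₂)
    (hφ : Function.Injective φ) (hφS : ∀ f : Sgp τ, φ (orbitMk τ v₁ f) = orbitMk τ v₂ f)
    (hsect : ∀ f : Sgp τ, sect f.1 v₁ = sect f.1 v₂) (ξ : ℕ → A) :
    (orbitω τ (catω v₁ ξ)).encard = (orbitω τ (catω v₂ ξ)).encard := by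
  have hsplit : split τ v₂ ξ = Prod.map φ id ∘ split τ v₁ ξ :=
    funext fun f => by simp [split, hφS, hsect]
  rw [encard_orbitω_catω, encard_orbitω_catω, hsplit, Set.range_comp,
    (hφ.prodMap Function.injective_id).encard_image]

end Synchronous

theorem mval_append_eq_of_equiv_general {Q A : Type*} (τ : Q → A → A × Q)
    (v₁ v₂ : List A) (φ : ↥(orbit τ v₁) ≃ ↥(orbit τ v₂))
    (hv₁ : v₁ ∈ orbit τ v₁) (hφv : (φ ⟨v₁, hv₁⟩ : List A) = v₂)
    (hπ : ∀ f ∈ Sgp τ, ∀ (w : ↥(orbit τ v₁)) (h : f (w : List A) ∈ orbit τ v₁),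
      ((φ ⟨f (w : List A), h⟩ : List A)) = f ((φ w : List A)))
    (hsect : ∀ f ∈ Sgp τ, ∀ w : ↥(orbit τ v₁),
      sect f (w : List A) = sect f ((φ w : List A))) :
    ∀ w : List A, mval τ (v₁ ++ w) = mval τ (v₂ ++ w) := by
  have hφS (f : Sgp τ) : φ (orbitMk τ v₁ f) = orbitMk τ v₂ f :=
    Subtype.ext <| (hπ f f.2 ⟨v₁, hv₁⟩ ⟨f, f.2, rfl⟩).trans (congrArg f.1 hφv)
  have hsect₁₂ (f : Sgp τ) : sect f.1 v₁ = sect f.1 v₂ :=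
    (hsect f f.2 ⟨v₁, hv₁⟩).trans (congrArg (sect f.1) hφv)
  intro w
  refine iSup_congr fun ξ => ?_
  rw [catω_append, catω_append]
  exact encard_orbitω_catω_eq τ φ φ.injective hφS hsect₁₂ _

/-- if there is a bijection `φ : S·v₁ → S·v₂` with `φ(v₁) = v₂` and
`ψ_{v₁}^φ = ψ_{v₂}` (expressed componentwise: `φ` intertwines the restricted actions,
i.e. `φ(s·w) = s·(φ w)`, and the sections agree, i.e. `s@w = s@(φ w)`), then
`m_{v₁⌢w} = m_{v₂⌢w}` for all `w ∈ A*`. -/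
theorem mval_append_eq_of_equiv {Q A : Type*} [Finite A] (τ : Q → A → A × Q)
    (v₁ v₂ : List A) (φ : ↥(orbit τ v₁) ≃ ↥(orbit τ v₂))
    (hv₁ : v₁ ∈ orbit τ v₁) (hφv : (φ ⟨v₁, hv₁⟩ : List A) = v₂)
    (hπ : ∀ f ∈ Sgp τ, ∀ (w : ↥(orbit τ v₁)) (h : f (w : List A) ∈ orbit τ v₁),
      ((φ ⟨f (w : List A), h⟩ : List A)) = f ((φ w : List A)))
    (hsect : ∀ f ∈ Sgp τ, ∀ w : ↥(orbit τ v₁),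
      sect f (w : List A) = sect f ((φ w : List A))) :
    ∀ w : List A, mval τ (v₁ ++ w) = mval τ (v₂ ++ w) :=
  mval_append_eq_of_equiv_general τ v₁ v₂ φ hv₁ hφv hπ hsect

end Mealy
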